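/- arXiv:1811.03355 — 5 statements merged into one kernel-verified Lean document; each statement's English description precedes it below -/
import Mathlib

section
/- In a finitary argumentation framework, the defense function is upward ω-continuous: for any directed family D of subsets of A, d(⋃_{X ∈ D} X) = ⋃_{X ∈ D} d(X). -/
/-! An argument is defended by `X` as soon as one defender per attacker lies in `X`. With finitely
many attackers, a defence by `⋃ D` thus uses only finitely many defenders, and a directed
family has a single member containing all of them. -/

variable {A : Type*}

/-- The defense function of an argumentation framework with attack relation `r`. -/
def defense (r : A → A → Prop) (X : Set A) : Set A :=
  {x | ∀ y, r y x → ∃ z ∈ X, r z y}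

/-- The neutrality function. -/
def neut (r : A → A → Prop) (X : Set A) : Set A :=
  {x | ¬ ∃ y ∈ X, r y x}

/-- A framework is finitary if every argument has finitely many attackers. -/
def Finitary (r : A → A → Prop) : Prop := ∀ x, {y | r y x}.Finite

lemma defense_mono (r : A → A → Prop) : Monotone (defense r) :=
  fun _ _ hXY _ hx y hy => (hx y hy).imp fun _ hz => ⟨hXY hz.1, hz.2⟩

lemma exists_finite_subset_mem_defense {r : A → A → Prop} {X : Set A} {x : A}
    (hx : {y | r y x}.Finite) (hxX : x ∈ defense r X) :
    ∃ S ⊆ X, S.Finite ∧ x ∈ defense r S := by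
  choose! f hfX hf using hxX
  exact ⟨f '' {y | r y x}, Set.image_subset_iff.2 hfX, hx.image f,
    fun y hy => ⟨f y, Set.mem_image_of_mem f hy, hf y hy⟩⟩

theorem defense_upward_continuous (r : A → A → Prop) (hfin : Finitary r)
    (D : Set (Set A)) (hne : D.Nonempty)
    (hdir : ∀ X ∈ D, ∀ Y ∈ D, ∃ Z ∈ D, X ⊆ Z ∧ Y ⊆ Z) :
    defense r (⋃ X ∈ D, X) = ⋃ X ∈ D, defense r X := by
  refine Set.Subset.antisymm (fun x hx => ?_) ((defense_mono r).le_map_iSup₂ _)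
  obtain ⟨S, hSD, hSfin, hxS⟩ := exists_finite_subset_mem_defense (hfin x) hx
  obtain ⟨Z, hZ, hSZ⟩ := DirectedOn.exists_mem_subset_of_finite_of_subset_sUnion hne hdir hSfin
    (Set.sUnion_eq_biUnion ▸ hSD)
  exact Set.mem_biUnion hZ (defense_mono r hSZ hxS)
end

section
/- Let Δ be a finitary argumentation framework and X ⊆ A admissible. If ⋃_{k < ω} d^k(X) = ⋂_{k < ω} d^k(n(X)), then this common set is a stable extension of Δ that includes X. -/
/-!
Since `d = n ∘ n`, the map `n` commutes with every iterate of `d`, and `n` turns unions into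
intersections. Hence `⋂ₖ dᵏ(n X) = ⋂ₖ n(dᵏ X) = n(⋃ₖ dᵏ X)`, so the hypothesis says exactly that
`⋃ₖ dᵏ X` is a fixed point of `n`; it contains `X = d⁰ X`.
-/

variable {A : Type*}

section

variable (r : A → A → Prop)

lemma defense_eq_neut_neut (Y : Set A) : defense r Y = neut r (neut r Y) := by
  ext x
  simp only [defense, neut, Set.mem_ofPred_eq, not_exists, not_and]
  grind

lemma neut_iUnion {ι : Sort*} (s : ι → Set A) : neut r (⋃ i, s i) = ⋂ i, neut r (s i) := by
  ext x
  simp only [neut, Set.mem_iUnion, Set.mem_iInter, Set.mem_ofPred_eq, not_exists, not_and,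
    forall_exists_index]
  exact forall_comm

lemma commute_defense_neut : Function.Commute (defense r) (neut r) := fun Y => by
  simp only [defense_eq_neut_neut]

lemma iInter_iterate_defense_neut (X : Set A) :
    ⋂ k, (defense r)^[k] (neut r X) = neut r (⋃ k, (defense r)^[k] X) := by
  simp only [((commute_defense_neut r).iterate_left _).eq, neut_iUnion]

end

theorem streams_converge_stable_general (r : A → A → Prop)
    (X : Set A)
    (heq : (⋃ k, (defense r)^[k] X) = ⋂ k, (defense r)^[k] (neut r X)) :
    (⋃ k, (defense r)^[k] X) = neut r (⋃ k, (defense r)^[k] X) ∧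
      X ⊆ ⋃ k, (defense r)^[k] X :=
  ⟨heq.trans (iInter_iterate_defense_neut r X), Set.subset_iUnion (fun k => (defense r)^[k] X) 0⟩

theorem streams_converge_stable (r : A → A → Prop) (hfin : Finitary r)
    (X : Set A) (hcf : X ⊆ neut r X) (hdef : X ⊆ defense r X)
    (heq : (⋃ k, (defense r)^[k] X) = ⋂ k, (defense r)^[k] (neut r X)) :
    (⋃ k, (defense r)^[k] X) = neut r (⋃ k, (defense r)^[k] X) ∧
      X ⊆ ⋃ k, (defense r)^[k] X :=
  streams_converge_stable_general r X heq
end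

section
/- The strength ordering on graded defense functions is characterized by the parameters: d_{m,n}(X) ⊆ d_{s,t}(X) for all X ⊆ A and all argumentation frameworks, if and only if m ≤ s and t ≤ n. -/
variable {A : Type*}

/-- Graded neutrality: arguments with fewer than `ℓ` attackers in `X`. -/
def grNeut (r : A → A → Prop) (ℓ : ℕ) (X : Set A) : Set A :=
  {x | {y ∈ X | r y x}.encard < (ℓ : ℕ∞)}

/-- Graded defense: arguments with fewer than `m` attackers that have
fewer than `n` counter-attackers in `X`. -/
def grDef (r : A → A → Prop) (m n : ℕ) (X : Set A) : Set A :=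
  {x | {y | r y x ∧ {z ∈ X | r z y}.encard < (n : ℕ∞)}.encard < (m : ℕ∞)}

/-! Sufficiency is monotonicity of `grDef` in its parameters. For necessity, consider an argument
with `k` attackers, each attacked by exactly `c` members of `X`: it is `(m, n)`-defended iff
`k < m` when `c < n`, and iff `0 < m` otherwise. Such two-level trees with `(k, c) = (s, n)`
separate `d_{m,n}` from `d_{s,t}` when `n < t`, and with `(k, c) = (s, 0)` when `s < m`. -/

theorem grDef_subset_grDef {r : A → A → Prop} {m n s t : ℕ} (hms : m ≤ s) (htn : t ≤ n)
    (X : Set A) : grDef r m n X ⊆ grDef r s t X := by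
  intro x hx
  refine lt_of_le_of_lt (Set.encard_mono ?_) (hx.trans_le (by exact_mod_cast hms))
  rintro y ⟨hyx, hy⟩
  exact ⟨hyx, hy.trans_le (by exact_mod_cast htn)⟩

theorem mem_grDef_iff_of_encard_eq {r : A → A → Prop} {X : Set A} {x : A} {m n k c : ℕ}
    (hk : {y | r y x}.encard = k) (hc : ∀ y, r y x → {z ∈ X | r z y}.encard = c) :
    x ∈ grDef r m n X ↔ if c < n then k < m else 0 < m := by
  change {y | r y x ∧ {z ∈ X | r z y}.encard < (n : ℕ∞)}.encard < m ↔ _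
  split_ifs with hcn
  · have hall : {y | r y x ∧ {z ∈ X | r z y}.encard < (n : ℕ∞)} = {y | r y x} :=
      Set.ext fun y ↦ ⟨And.left, fun hyx ↦ ⟨hyx, by rw [hc y hyx]; exact_mod_cast hcn⟩⟩
    rw [hall, hk, Nat.cast_lt]
  · have hnone : {y | r y x ∧ {z ∈ X | r z y}.encard < (n : ℕ∞)} = ∅ :=
      Set.eq_empty_of_forall_notMem fun y ⟨hyx, hy⟩ ↦
        hcn (by rw [hc y hyx] at hy; exact_mod_cast hy)
    rw [hnone, Set.encard_empty, Nat.cast_pos]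

/-- The root `none` is attacked by the `k` arguments `some (i, none)`, and each of these by the
`c` arguments `some (i, some j)`. -/
def twoLevelTree (k c : ℕ) :
    Option (Fin k × Option (Fin c)) → Option (Fin k × Option (Fin c)) → Prop
  | some (_, none), none => True
  | some (i, some _), some (i', none) => i = i'
  | _, _ => False

theorem encard_range_of_injective {ι α : Type*} {f : ι → α} (hf : f.Injective) :
    (Set.range f).encard = ENat.card ι := by
  rw [← Set.image_univ, hf.encard_image, Set.encard_univ]

theorem twoLevelTree_encard_attackers_root (k c : ℕ) :
    {y | twoLevelTree k c y none}.encard = k := by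
  have : {y | twoLevelTree k c y none} = Set.range fun i ↦ some (i, none) := by
    ext (_ | ⟨i, _ | j⟩) <;> simp [twoLevelTree]
  rw [this, encard_range_of_injective fun i i' h ↦ by simpa using h]
  simp

theorem twoLevelTree_encard_attackers_branch (k c : ℕ) (i : Fin k) :
    {z ∈ Set.univ | twoLevelTree k c z (some (i, none))}.encard = c := by
  have : {z ∈ Set.univ | twoLevelTree k c z (some (i, none))} =
      Set.range fun j ↦ some (i, some j) := by
    ext (_ | ⟨i', _ | j⟩) <;> simp [twoLevelTree, eq_comm]
  rw [this, encard_range_of_injective fun j j' h ↦ by simpa using h]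
  simp

theorem twoLevelTree_root_mem_grDef_iff (k c m n : ℕ) :
    none ∈ grDef (twoLevelTree k c) m n Set.univ ↔ if c < n then k < m else 0 < m := by
  refine mem_grDef_iff_of_encard_eq (twoLevelTree_encard_attackers_root k c) ?_
  rintro (_ | ⟨i, _ | j⟩) hy <;> simp only [twoLevelTree] at hy
  exact twoLevelTree_encard_attackers_branch k c i

theorem grDef_strength_order_iff_general (m n s t : ℕ)
    (hm : 0 < m) (ht : 0 < t) :
    (∀ (A : Type) (r : A → A → Prop) (X : Set A), grDef r m n X ⊆ grDef r s t X) ↔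
      (m ≤ s ∧ t ≤ n) := by
  refine ⟨fun h ↦ ?_, fun ⟨hms, htn⟩ A r X ↦ grDef_subset_grDef hms htn X⟩
  have separates (c : ℕ) (hin : none ∈ grDef (twoLevelTree s c) m n Set.univ) (hct : c < t) :
      False := by
    have hout := h _ _ _ hin
    rw [twoLevelTree_root_mem_grDef_iff, if_pos hct] at hout
    exact lt_irrefl s hout
  have htn : t ≤ n := by
    by_contra! hnt
    refine separates n ?_ hnt
    rw [twoLevelTree_root_mem_grDef_iff, if_neg (lt_irrefl n)]
    exact hm
  refine ⟨?_, htn⟩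
  by_contra! hsm
  refine separates 0 ?_ ht
  rw [twoLevelTree_root_mem_grDef_iff, if_pos (ht.trans_le htn)]
  exact hsm

theorem grDef_strength_order_iff (m n s t : ℕ)
    (hm : 0 < m) (hn : 0 < n) (hs : 0 < s) (ht : 0 < t) :
    (∀ (A : Type) (r : A → A → Prop) (X : Set A), grDef r m n X ⊆ grDef r s t X) ↔
      (m ≤ s ∧ t ≤ n) :=
  grDef_strength_order_iff_general m n s t hm ht
end

section
/- In a finitary argumentation framework, the graded defense function d_{m,n} is upward continuous: for any directed family D of subsets of A, d_{m,n}(⋃_{X ∈ D} X) = ⋃_{X ∈ D} d_{m,n}(X). -/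
variable {A : Type*}

/- A finitary framework makes the graded defense of `x` depend only on the finitely many
attackers of attackers of `x`. A directed family has a member containing those of them
that lie in its union, and from that member `x` is defended exactly as from the union. -/

section GradedDefense

variable (r : A → A → Prop) (m n : ℕ)

theorem grDef_mono : Monotone (grDef r m n) := by
  intro X Y hXY x hx
  refine lt_of_le_of_lt (Set.encard_mono ?_) hx
  rintro y ⟨hyx, hy⟩
  have hsub : {z ∈ X | r z y} ⊆ {z ∈ Y | r z y} := fun _ => And.imp_left (@hXY _)
  exact ⟨hyx, lt_of_le_of_lt (Set.encard_mono hsub) hy⟩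

theorem mem_grDef_iff_of_forall_attacks {X Y : Set A} {x : A}
    (h : ∀ y z, r y x → r z y → (z ∈ X ↔ z ∈ Y)) :
    x ∈ grDef r m n X ↔ x ∈ grDef r m n Y := by
  have hsame : {y | r y x ∧ {z ∈ X | r z y}.encard < (n : ℕ∞)} =
      {y | r y x ∧ {z ∈ Y | r z y}.encard < (n : ℕ∞)} := by
    ext y
    refine and_congr_right fun hyx => ?_
    have hXY : {z ∈ X | r z y} = {z ∈ Y | r z y} := by
      ext z
      exact and_congr_left (h y z hyx)
    rw [hXY]
  simp only [grDef, Set.mem_ofPred_eq, hsame]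

variable {r}

theorem Finitary.finite_attackers_of_attackers (hfin : Finitary r) (x : A) :
    {z | ∃ y, r y x ∧ r z y}.Finite := by
  refine ((hfin x).biUnion fun y _ => hfin y).subset ?_
  rintro z ⟨y, hyx, hzy⟩
  exact Set.mem_biUnion hyx hzy

end GradedDefense

theorem grDef_upward_continuous_general (r : A → A → Prop) (hfin : Finitary r)
    (m n : ℕ)
    (D : Set (Set A)) (hne : D.Nonempty)
    (hdir : ∀ X ∈ D, ∀ Y ∈ D, ∃ Z ∈ D, X ⊆ Z ∧ Y ⊆ Z) :
    grDef r m n (⋃ X ∈ D, X) = ⋃ X ∈ D, grDef r m n X := by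
  rw [← Set.sUnion_eq_biUnion]
  refine subset_antisymm (fun x hx => ?_)
    (Set.iUnion₂_subset fun X hX => grDef_mono r m n (Set.subset_sUnion_of_mem hX))
  obtain ⟨Z, hZ, hsub⟩ := DirectedOn.exists_mem_subset_of_finite_of_subset_sUnion hne hdir
    ((hfin.finite_attackers_of_attackers x).inter_of_left (⋃₀ D)) Set.inter_subset_right
  refine Set.mem_biUnion hZ ((mem_grDef_iff_of_forall_attacks r m n fun y z hyx hzy => ?_).1 hx)
  exact ⟨fun hzU => hsub ⟨⟨y, hyx, hzy⟩, hzU⟩, fun hzZ => Set.subset_sUnion_of_mem hZ hzZ⟩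

theorem grDef_upward_continuous (r : A → A → Prop) (hfin : Finitary r)
    (m n : ℕ) (hm : 0 < m) (hn : 0 < n)
    (D : Set (Set A)) (hne : D.Nonempty)
    (hdir : ∀ X ∈ D, ∀ Y ∈ D, ∃ Z ∈ D, X ⊆ Z ∧ Y ⊆ Z) :
    grDef r m n (⋃ X ∈ D, X) = ⋃ X ∈ D, grDef r m n X :=
  grDef_upward_continuous_general r hfin m n D hne hdir
end

section
/- (Graded fundamental lemma) Let Δ be a finitary argumentation framework, m, n positive integers with n ≥ m, and X ⊆ A with X ⊆ d_{m,n}(X) and X ⊆ n_m(X). Then for every natural number k, X ⊆ d_{m,n}^k(X) ⊆ n_m(d_{m,n}^k(X)) ⊆ n_m(X); in particular every iterate d_{m,n}^k(X) is m-conflict-free. -/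
variable {A : Type*}

/-!
Defense is monotone and neutrality antitone, so a self-defending `X` lies below every iterate
`d^k X`, and `n(d^k X) ⊆ n(X)`. Conflict-freeness propagates one step at a time: call `y`
weakly counter-attacked from `Y` if it has fewer than `n` attackers in `Y`. If `Y` is
`n`-conflict-free and `y ∈ d(Y)`, each attacker of `y` in `Y` is one of the fewer than `m ≤ n`
weakly counter-attacked attackers of `y`, so `y` is itself weakly counter-attacked. Hence the
attackers of `x ∈ d(Y)` lying in `d(Y)` are among its fewer than `m` weakly counter-attacked ones.
-/

theorem grNeut_antitone (r : A → A → Prop) (ℓ : ℕ) : Antitone (grNeut r ℓ) := by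
  intro X Y hXY x hx
  refine (Set.encard_mono ?_).trans_lt hx
  exact fun y hy => ⟨hXY hy.1, hy.2⟩

theorem grNeut_subset_grNeut_of_le (r : A → A → Prop) {ℓ ℓ' : ℕ} (h : ℓ ≤ ℓ') (X : Set A) :
    grNeut r ℓ X ⊆ grNeut r ℓ' X :=
  fun _ hx => show _ < (ℓ' : ℕ∞) from hx.trans_le (by exact_mod_cast h)

theorem grDef_monotone (r : A → A → Prop) (m n : ℕ) : Monotone (grDef r m n) := by
  intro X Y hXY x hx
  refine (Set.encard_mono ?_).trans_lt hx
  rintro y ⟨hyx, hy⟩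
  refine ⟨hyx, (Set.encard_mono ?_).trans_lt hy⟩
  exact fun z hz => ⟨hXY hz.1, hz.2⟩

theorem grDef_subset_grNeut_grDef (r : A → A → Prop) {m n : ℕ} (hnm : m ≤ n) {X : Set A}
    (hcf : X ⊆ grNeut r n X) : grDef r m n X ⊆ grNeut r m (grDef r m n X) := by
  have hmn : (m : ℕ∞) ≤ n := by exact_mod_cast hnm
  intro x hx
  refine (Set.encard_mono ?_).trans_lt hx
  rintro y ⟨hyD, hyx⟩
  have hweak : {z ∈ X | r z y} ⊆ {z | r z y ∧ {w ∈ X | r w z}.encard < n} :=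
    fun z hz => ⟨hz.2, hcf hz.1⟩
  exact ⟨hyx, ((Set.encard_mono hweak).trans_lt hyD).trans_le hmn⟩

theorem graded_fundamental_lemma_general (r : A → A → Prop)
    (m n : ℕ) (hnm : m ≤ n)
    (X : Set A) (hdef : X ⊆ grDef r m n X) (hcf : X ⊆ grNeut r m X) (k : ℕ) :
    X ⊆ (grDef r m n)^[k] X ∧
      (grDef r m n)^[k] X ⊆ grNeut r m ((grDef r m n)^[k] X) ∧
      grNeut r m ((grDef r m n)^[k] X) ⊆ grNeut r m X := by
  have hsub : X ⊆ (grDef r m n)^[k] X :=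
    (grDef_monotone r m n).monotone_iterate_of_le_map hdef (Nat.zero_le k)
  have hcf_iter : (grDef r m n)^[k] X ⊆ grNeut r m ((grDef r m n)^[k] X) :=
    Function.Iterate.rec (fun Y => Y ⊆ grNeut r m Y) hcf
      (fun _ hY => grDef_subset_grNeut_grDef r hnm (hY.trans (grNeut_subset_grNeut_of_le r hnm _)))
      k
  exact ⟨hsub, hcf_iter, grNeut_antitone r m hsub⟩

theorem graded_fundamental_lemma (r : A → A → Prop) (hfin : Finitary r)
    (m n : ℕ) (hm : 0 < m) (hn : 0 < n) (hnm : m ≤ n)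
    (X : Set A) (hdef : X ⊆ grDef r m n X) (hcf : X ⊆ grNeut r m X) (k : ℕ) :
    X ⊆ (grDef r m n)^[k] X ∧
      (grDef r m n)^[k] X ⊆ grNeut r m ((grDef r m n)^[k] X) ∧
      grNeut r m ((grDef r m n)^[k] X) ⊆ grNeut r m X :=
  graded_fundamental_lemma_general r m n hnm X hdef hcf k
end
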